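/- arXiv:math/0211396 — 7 statements merged into one kernel-verified Lean document; each statement's English description precedes it below -/
import Mathlib

section
/- For a finite nonempty subgraph Y of a 2m-regular graph, 2m − δ(Y) ≤ 2m · #∂Y / #Y, where δ(Y) is the average degree of Y in the induced subgraph and ∂Y is the external boundary of Y. -/
/-!
Summing degrees over `Y`, each vertex `v ∈ Y` has `#(N v ∩ Y)` neighbours inside `Y` and all
its other neighbours lie in `∂Y`. Counting the edges between `Y` and `∂Y` from the `∂Y` side,
each `w ∈ ∂Y` accounts for at most `deg w = 2m` of them, so `2m · #Y ≤ δ(Y) · #Y + 2m · #∂Y`.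
-/

open Finset

namespace SimpleGraph

variable {V : Type*} (G : SimpleGraph V) [G.LocallyFinite]

def externalBoundary [DecidableEq V] (Y : Finset V) : Finset V :=
  Y.biUnion (fun v => G.neighborFinset v) \ Y

theorem sum_card_neighborFinset_inter_comm [DecidableEq V] (A B : Finset V) :
    ∑ v ∈ A, #(G.neighborFinset v ∩ B) = ∑ w ∈ B, #(G.neighborFinset w ∩ A) := by
  classical
  have hAbove : ∀ v, G.neighborFinset v ∩ B = B.bipartiteAbove G.Adj v := fun v => by
    ext w; simp [bipartiteAbove, and_comm]
  have hBelow : ∀ w, G.neighborFinset w ∩ A = A.bipartiteBelow G.Adj w := fun w => by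
    ext v; simp [bipartiteBelow, and_comm, G.adj_comm]
  simp only [hAbove, hBelow]
  exact sum_card_bipartiteAbove_eq_sum_card_bipartiteBelow G.Adj

variable [DecidableEq V]

theorem neighborFinset_inter_externalBoundary {Y : Finset V} {v : V} (hv : v ∈ Y) :
    G.neighborFinset v ∩ G.externalBoundary Y = G.neighborFinset v \ Y := by
  ext w
  simp only [externalBoundary, mem_inter, mem_sdiff, mem_biUnion]
  exact ⟨fun ⟨hw, _, hwY⟩ => ⟨hw, hwY⟩, fun ⟨hw, hwY⟩ => ⟨hw, ⟨v, hv, hw⟩, hwY⟩⟩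

theorem card_neighborFinset_inter_add_card_inter_externalBoundary {Y : Finset V} {v : V}
    (hv : v ∈ Y) :
    #(G.neighborFinset v ∩ Y) + #(G.neighborFinset v ∩ G.externalBoundary Y) = G.degree v := by
  rw [G.neighborFinset_inter_externalBoundary hv, card_inter_add_card_sdiff,
    card_neighborFinset_eq_degree]

theorem sum_degree_le_sum_card_inter_add_sum_degree_externalBoundary (Y : Finset V) :
    ∑ v ∈ Y, G.degree v ≤
      ∑ v ∈ Y, #(G.neighborFinset v ∩ Y) + ∑ w ∈ G.externalBoundary Y, G.degree w :=
  calc ∑ v ∈ Y, G.degree v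
      = ∑ v ∈ Y, #(G.neighborFinset v ∩ Y)
          + ∑ v ∈ Y, #(G.neighborFinset v ∩ G.externalBoundary Y) := by
        rw [← sum_add_distrib]
        exact sum_congr rfl fun v hv =>
          (G.card_neighborFinset_inter_add_card_inter_externalBoundary hv).symm
    _ = ∑ v ∈ Y, #(G.neighborFinset v ∩ Y)
          + ∑ w ∈ G.externalBoundary Y, #(G.neighborFinset w ∩ Y) := by
        rw [G.sum_card_neighborFinset_inter_comm Y (G.externalBoundary Y)]
    _ ≤ ∑ v ∈ Y, #(G.neighborFinset v ∩ Y) + ∑ w ∈ G.externalBoundary Y, G.degree w := by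
        gcongr with w
        exact card_le_card inter_subset_left

theorem mul_card_le_sum_card_inter_add_mul_card_externalBoundary {d : ℕ}
    (hreg : ∀ v, G.degree v = d) (Y : Finset V) :
    d * #Y ≤ ∑ v ∈ Y, #(G.neighborFinset v ∩ Y) + d * #(G.externalBoundary Y) := by
  simpa [hreg, mul_comm] using G.sum_degree_le_sum_card_inter_add_sum_degree_externalBoundary Y

end SimpleGraph

/-- For a finite nonempty subgraph `Y` of a `2m`-regular graph,
`2m − δ(Y) ≤ 2m · #∂Y / #Y`, where `δ(Y)` is the average internal degree of `Y`
and `∂Y = B₁(Y) \ Y` is the external boundary. -/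
theorem le_mul_boundary_card_div {V : Type*} [DecidableEq V] (G : SimpleGraph V)
    [DecidableRel G.Adj] [∀ v : V, Fintype (G.neighborSet v)] (m : ℕ)
    (hreg : ∀ v : V, G.degree v = 2 * m)
    (Y : Finset V) (hY : Y.Nonempty) :
    2 * m - (∑ v ∈ Y, ((G.neighborFinset v ∩ Y).card : ℝ)) / Y.card ≤
      2 * m * (((Y.biUnion (fun v => G.neighborFinset v)) \ Y).card : ℝ) / Y.card := by
  have hcount : ((2 * m * Y.card : ℕ) : ℝ) ≤
      ((∑ v ∈ Y, (G.neighborFinset v ∩ Y).card + 2 * m * (G.externalBoundary Y).card : ℕ) : ℝ) :=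
    Nat.cast_le.mpr (G.mul_card_le_sum_card_inter_add_mul_card_externalBoundary hreg Y)
  have hYpos : (0 : ℝ) < Y.card := by exact_mod_cast hY.card_pos
  rw [sub_le_iff_le_add, ← add_div, le_div_iff₀ hYpos]
  push_cast at hcount
  exact hcount.trans_eq (add_comm _ _)
end

section
/- Let C be the Cayley graph of a 2-generated group, and suppose its density satisfies δ(Y) ≤ 3 for every finite nonempty subgraph Y. Then the doubling inequality holds: #B₁(Y) ≥ 2·#Y for every finite set Y of vertices. -/
open Finset

/-- Double counting edges between two finsets. -/
lemma double_count {V : Type*} [DecidableEq V] (G : SimpleGraph V)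
    [DecidableRel G.Adj] [∀ v : V, Fintype (G.neighborSet v)] (R S : Finset V) :
    ∑ u ∈ S, (G.neighborFinset u ∩ R).card = ∑ v ∈ R, (G.neighborFinset v ∩ S).card := by
  have h : ∀ (P : Finset V) (u : V), (G.neighborFinset u ∩ P).card
      = ∑ v ∈ P, if G.Adj u v then 1 else 0 := by
    intro P u
    have h2 : G.neighborFinset u ∩ P = P.filter (fun v => G.Adj u v) := by
      ext x
      simp [SimpleGraph.mem_neighborFinset, and_comm]
    rw [h2, Finset.card_filter]
  simp only [h]
  rw [Finset.sum_comm]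
  apply Finset.sum_congr rfl
  intro v _
  apply Finset.sum_congr rfl
  intro u _
  simp [G.adj_comm]

/-- If the density of a 4-regular graph (the Cayley graph of a 2-generated group)
is at most 3, i.e. every finite nonempty subgraph has average degree at most 3,
then the doubling inequality `#B₁(Y) ≥ 2·#Y` holds for every finite set of vertices. -/
theorem doubling_of_density_le_three {V : Type*} [DecidableEq V] (G : SimpleGraph V)
    [DecidableRel G.Adj] [∀ v : V, Fintype (G.neighborSet v)]
    (hreg : ∀ v : V, G.degree v = 4)
    (hdens : ∀ Y : Finset V, Y.Nonempty →
      (∑ v ∈ Y, ((G.neighborFinset v ∩ Y).card : ℝ)) / Y.card ≤ 3) :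
    ∀ Y : Finset V, 2 * Y.card ≤ (Y ∪ Y.biUnion (fun v => G.neighborFinset v)).card := by
  -- integer form of the density hypothesis
  have hdensN : ∀ W : Finset V, W.Nonempty →
      ∑ v ∈ W, (G.neighborFinset v ∩ W).card ≤ 3 * W.card := by
    intro W hW
    have hc : (0 : ℝ) < W.card := by exact_mod_cast hW.card_pos
    have h1 := hdens W hW
    rw [div_le_iff₀ hc] at h1
    have h2 : (∑ v ∈ W, ((G.neighborFinset v ∩ W).card : ℝ)) ≤ 3 * W.card := by linarith
    exact_mod_cast h2
  intro Y
  by_cases hY : Y = ∅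
  · simp [hY]
  have hYne : Y.Nonempty := nonempty_iff_ne_empty.mpr hY
  set Z : Finset V := Y ∪ Y.biUnion (fun v => G.neighborFinset v) with hZdef
  have hYZ : Y ⊆ Z := subset_union_left
  have hNsub : ∀ v ∈ Y, G.neighborFinset v ⊆ Z := by
    intro v hv
    rw [hZdef]
    exact (Finset.subset_biUnion_of_mem (fun v => G.neighborFinset v) hv).trans
      subset_union_right
  set D : Finset V := Z \ Y with hDdef
  set T : Finset V := D.filter (fun u => 2 ≤ (G.neighborFinset u ∩ Y).card) with hTdef
  have hTD : T ⊆ D := filter_subset _ _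
  have hdisjYD : Disjoint Y D := Finset.disjoint_sdiff
  have hdisj : Disjoint Y T := hdisjYD.mono_right hTD
  set n := Y.card with hndef
  set b := D.card with hbdef
  set t := T.card with htdef
  set A := ∑ v ∈ Y, (G.neighborFinset v ∩ Y).card with hAdef
  set K := ∑ u ∈ T, (G.neighborFinset u ∩ Y).card with hKdef
  set E := ∑ u ∈ D, (G.neighborFinset u ∩ Y).card with hEdef
  -- each vertex's neighborhood has 4 elements
  have hdeg : ∀ v : V, (G.neighborFinset v).card = 4 := by
    intro v
    rw [SimpleGraph.card_neighborFinset_eq_degree]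
    exact hreg v
  -- H4 : E + A = 4 * n
  have H4 : E + A = 4 * n := by
    have hdc : E = ∑ v ∈ Y, (G.neighborFinset v ∩ D).card := double_count G Y D
    have hterm : ∀ v ∈ Y, (G.neighborFinset v ∩ D).card + (G.neighborFinset v ∩ Y).card = 4 := by
      intro v hv
      have hND : G.neighborFinset v ∩ D = G.neighborFinset v \ Y := by
        rw [hDdef]
        ext x
        simp only [mem_inter, mem_sdiff]
        constructor
        · tauto
        · rintro ⟨hx, hxY⟩
          exact ⟨hx, hNsub v hv hx, hxY⟩
      rw [hND, Finset.card_sdiff_add_card_inter]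
      exact hdeg v
    calc E + A = ∑ v ∈ Y, ((G.neighborFinset v ∩ D).card + (G.neighborFinset v ∩ Y).card) := by
          rw [hdc, hAdef, ← Finset.sum_add_distrib]
      _ = ∑ _v ∈ Y, 4 := Finset.sum_congr rfl hterm
      _ = 4 * n := by rw [Finset.sum_const, smul_eq_mul, mul_comm]
  -- H5 pieces
  have hsplitD : ∑ u ∈ D \ T, (G.neighborFinset u ∩ Y).card + K = E := by
    rw [hKdef, hEdef]
    exact Finset.sum_sdiff hTD
  have hDTle : ∑ u ∈ D \ T, (G.neighborFinset u ∩ Y).card ≤ (D \ T).card := by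
    calc ∑ u ∈ D \ T, (G.neighborFinset u ∩ Y).card ≤ ∑ _u ∈ D \ T, 1 := by
          apply Finset.sum_le_sum
          intro u hu
          rw [mem_sdiff] at hu
          obtain ⟨huD, huT⟩ := hu
          by_contra hc
          push_neg at hc
          exact huT (mem_filter.mpr ⟨huD, by omega⟩)
      _ = (D \ T).card := by simp
  have hDTcard : (D \ T).card + t = b := Finset.card_sdiff_add_card_eq_card hTD
  -- H3 : 2 * t ≤ K
  have H3 : 2 * t ≤ K := by
    calc 2 * t = ∑ _u ∈ T, 2 := by rw [Finset.sum_const, smul_eq_mul, mul_comm]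
      _ ≤ K := Finset.sum_le_sum (fun u hu => (mem_filter.mp hu).2)
  -- H2 : A + 2 * K ≤ 3 * (n + t)
  have H2 : A + 2 * K ≤ 3 * (n + t) := by
    have hW : (Y ∪ T).Nonempty := hYne.mono subset_union_left
    have hdW := hdensN (Y ∪ T) hW
    have hcardW : (Y ∪ T).card = n + t := Finset.card_union_of_disjoint hdisj
    rw [hcardW] at hdW
    have hterm : ∀ w : V, (G.neighborFinset w ∩ (Y ∪ T)).card
        = (G.neighborFinset w ∩ Y).card + (G.neighborFinset w ∩ T).card := by
      intro w
      rw [Finset.inter_union_distrib_left]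
      exact Finset.card_union_of_disjoint
        (hdisj.mono Finset.inter_subset_right Finset.inter_subset_right)
    have hX : ∑ v ∈ Y, (G.neighborFinset v ∩ T).card = K := double_count G T Y
    have e1 : ∑ w ∈ Y ∪ T, (G.neighborFinset w ∩ (Y ∪ T)).card
        = A + K + (K + ∑ u ∈ T, (G.neighborFinset u ∩ T).card) := by
      rw [Finset.sum_union hdisj]
      simp only [hterm]
      rw [Finset.sum_add_distrib, Finset.sum_add_distrib, hX, hAdef, hKdef]
    rw [e1] at hdW
    omega
  -- sizes
  have Hcard : b + n = Z.card := Finset.card_sdiff_add_card_eq_card hYZ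
  omega
end

section
/- If a 4-regular graph C satisfies the doubling inequality #B₁(Y) ≥ 2·#Y for every finite vertex set Y, then δ(Y) ≤ 3 for every finite nonempty subgraph Y; i.e., the density of C is at most 3. -/
/-- If a 4-regular graph satisfies the doubling inequality `#B₁(Y) ≥ 2·#Y` for every
finite vertex set `Y`, then every finite nonempty subgraph has average degree at most 3,
i.e. the density of the graph is at most 3. -/
theorem density_le_three_of_doubling {V : Type*} [DecidableEq V] (G : SimpleGraph V)
    [DecidableRel G.Adj] [∀ v : V, Fintype (G.neighborSet v)]
    (hreg : ∀ v : V, G.degree v = 4)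
    (hdoub : ∀ Y : Finset V, 2 * Y.card ≤ (Y ∪ Y.biUnion (fun v => G.neighborFinset v)).card) :
    ∀ Y : Finset V, Y.Nonempty →
      (∑ v ∈ Y, ((G.neighborFinset v ∩ Y).card : ℝ)) / Y.card ≤ 3 := by
  intro Y hY
  -- sum of degrees splits into inside and outside contributions
  have hsplit : ∑ v ∈ Y, (G.neighborFinset v ∩ Y).card
      + ∑ v ∈ Y, (G.neighborFinset v \ Y).card = 4 * Y.card := by
    rw [← Finset.sum_add_distrib]
    have : ∀ v ∈ Y, (G.neighborFinset v ∩ Y).card + (G.neighborFinset v \ Y).card = 4 := by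
      intro v _
      rw [Finset.card_inter_add_card_sdiff]
      simpa [SimpleGraph.card_neighborFinset_eq_degree] using hreg v
    rw [Finset.sum_congr rfl this]
    simp [mul_comm]
  -- the union is covered by Y together with the outside neighbours
  have hsub : (Y ∪ Y.biUnion (fun v => G.neighborFinset v))
      ⊆ Y ∪ Y.biUnion (fun v => G.neighborFinset v \ Y) := by
    intro x hx
    rcases Finset.mem_union.mp hx with h | h
    · exact Finset.mem_union_left _ h
    · by_cases hxY : x ∈ Y
      · exact Finset.mem_union_left _ hxY
      · rcases Finset.mem_biUnion.mp h with ⟨v, hv, hxv⟩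
        exact Finset.mem_union_right _ (Finset.mem_biUnion.mpr
          ⟨v, hv, Finset.mem_sdiff.mpr ⟨hxv, hxY⟩⟩)
  have hcard : (Y ∪ Y.biUnion (fun v => G.neighborFinset v)).card
      ≤ Y.card + ∑ v ∈ Y, (G.neighborFinset v \ Y).card :=
    le_trans (Finset.card_le_card hsub)
      (le_trans (Finset.card_union_le _ _)
        (by gcongr; exact Finset.card_biUnion_le))
  have hbd : 2 * Y.card ≤ Y.card + ∑ v ∈ Y, (G.neighborFinset v \ Y).card :=
    le_trans (hdoub Y) hcard
  have hnat : ∑ v ∈ Y, (G.neighborFinset v ∩ Y).card ≤ 3 * Y.card := by omega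
  have hpos : (0 : ℝ) < (Y.card : ℝ) := by
    exact_mod_cast Finset.card_pos.mpr hY
  rw [div_le_iff₀ hpos]
  calc (∑ v ∈ Y, ((G.neighborFinset v ∩ Y).card : ℝ))
      = ((∑ v ∈ Y, (G.neighborFinset v ∩ Y).card : ℕ) : ℝ) := by push_cast; ring
    _ ≤ ((3 * Y.card : ℕ) : ℝ) := by exact_mod_cast hnat
    _ = 3 * (Y.card : ℝ) := by push_cast; ring
end

section
/- In any finite nonempty subgraph Y of the Cayley graph of Thompson's group F with generators x₀, x₁, there exists a vertex of degree at most 2 in Y. -/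
/-- The two defining relators of Thompson's group `F` in the generators `x₀, x₁`:
`x₁^{x₀²} = x₁^{x₀x₁}` and `x₁^{x₀³} = x₁^{x₀²x₁}`. -/
def thompsonRels : Set (FreeGroup (Fin 2)) :=
  { ((FreeGroup.of 0 ^ 2)⁻¹ * FreeGroup.of 1 * FreeGroup.of 0 ^ 2)⁻¹ *
      ((FreeGroup.of 0 * FreeGroup.of 1)⁻¹ * FreeGroup.of 1 * (FreeGroup.of 0 * FreeGroup.of 1)),
    ((FreeGroup.of 0 ^ 3)⁻¹ * FreeGroup.of 1 * FreeGroup.of 0 ^ 3)⁻¹ *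
      ((FreeGroup.of 0 ^ 2 * FreeGroup.of 1)⁻¹ * FreeGroup.of 1 *
        (FreeGroup.of 0 ^ 2 * FreeGroup.of 1)) }

/-- Thompson's group `F`, presented on the two generators `x₀, x₁`. -/
abbrev ThompsonF : Type := PresentedGroup thompsonRels

/-- The generator `x₀` of Thompson's group `F`. -/
def x₀ : ThompsonF := PresentedGroup.of 0

/-- The generator `x₁` of Thompson's group `F`. -/
def x₁ : ThompsonF := PresentedGroup.of 1

/-- The Cayley graph of Thompson's group `F` with respect to `{x₀^{±1}, x₁^{±1}}`:
two elements are adjacent iff they differ by right multiplication by a generator. -/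
def cayleyF : SimpleGraph ThompsonF :=
  SimpleGraph.fromRel (fun v w => ∃ s ∈ ({x₀, x₁, x₀⁻¹, x₁⁻¹} : Set ThompsonF), w = v * s)


/-- Auxiliary: the relators die under the map sending both generators to `1 ∈ ℤ`. -/
lemma thompsonRels_lift : ∀ r ∈ thompsonRels,
    (FreeGroup.lift (fun _ : Fin 2 => Multiplicative.ofAdd (1 : ℤ))) r = 1 := by
  intro r hr
  simp only [thompsonRels, Set.mem_insert_iff, Set.mem_singleton_iff] at hr
  rcases hr with rfl | rfl <;>
    · simp only [map_mul, map_inv, map_pow, FreeGroup.lift_apply_of]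
      group

/-- The "total exponent" homomorphism `F → ℤ`. -/
def φ : ThompsonF →* Multiplicative ℤ := PresentedGroup.toGroup thompsonRels_lift

lemma φ_x₀ : φ x₀ = Multiplicative.ofAdd 1 := PresentedGroup.toGroup.of _
lemma φ_x₁ : φ x₁ = Multiplicative.ofAdd 1 := PresentedGroup.toGroup.of _

/-- In any finite nonempty subgraph `Y` of the Cayley graph of Thompson's group `F`
in generators `x₀, x₁`, there is a vertex whose degree inside `Y` is at most 2. -/
theorem exists_vertex_degree_le_two (Y : Finset ThompsonF) (hY : Y.Nonempty) :
    ∃ v ∈ Y, ({w : ThompsonF | w ∈ Y ∧ cayleyF.Adj v w}).ncard ≤ 2 := by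
  obtain ⟨v, hv, hmax⟩ := Y.exists_max_image (fun g => Multiplicative.toAdd (φ g)) hY
  refine ⟨v, hv, ?_⟩
  have hsub : {w : ThompsonF | w ∈ Y ∧ cayleyF.Adj v w} ⊆ {v * x₀⁻¹, v * x₁⁻¹} := by
    rintro w ⟨hw, hadj⟩
    rw [cayleyF, SimpleGraph.fromRel_adj] at hadj
    obtain ⟨hne, h | h⟩ := hadj
    · obtain ⟨s, hs, rfl⟩ := h
      have hlt : ¬ (Multiplicative.toAdd (φ v) + 1 ≤ Multiplicative.toAdd (φ v)) := by omega
      rcases hs with rfl | rfl | rfl | rfl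
      · exact absurd (by simpa [map_mul, φ_x₀] using hmax _ hw) hlt
      · exact absurd (by simpa [map_mul, φ_x₁] using hmax _ hw) hlt
      · left; rfl
      · right; rfl
    · obtain ⟨s, hs, hv'⟩ := h
      have hw' : w = v * s⁻¹ := by rw [hv']; group
      subst hw'
      have hlt : ¬ (Multiplicative.toAdd (φ v) + 1 ≤ Multiplicative.toAdd (φ v)) := by omega
      rcases hs with rfl | rfl | rfl | rfl
      · left; rfl
      · right; rfl
      · exact absurd (by simpa [map_mul, φ_x₀] using hmax _ hw) hlt
      · exact absurd (by simpa [map_mul, φ_x₁] using hmax _ hw) hlt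
  calc ({w : ThompsonF | w ∈ Y ∧ cayleyF.Adj v w}).ncard
      ≤ ({v * x₀⁻¹, v * x₁⁻¹} : Set ThompsonF).ncard :=
        Set.ncard_le_ncard hsub (Set.toFinite _)
    _ ≤ 2 := by
        simpa using Set.ncard_insert_le (v * x₀⁻¹) ({v * x₁⁻¹} : Set ThompsonF)
end

section
/- The sequence a_{n,k} defined by a_{1,1} = 1 and the recursions a_{n+1,k} = a_{n,k-1} + a_{n,k} + ⋯ + a_{n,n} for 2 ≤ k ≤ n+1 (interpreting a_{n,k-1}+⋯ appropriately: a_{n+1,i} = Σ_{k ≥ i−1, 1 ≤ k ≤ n} a_{n,k}) and a_{n+1,1} = a_{n,1} + ⋯ + a_{n,n}, satisfies the closed form a_{n,k} = k·(2n−k−1)! / ((n−k)!·n!) for all 1 ≤ k ≤ n. -/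
/-!
The closed form `ballot n k` satisfies `ballot n n = 1` and the ballot recurrence
`ballot (n + 1) (j + 1) = ballot n j + ballot (n + 1) (j + 2)`, so the tail sums
`∑_{k = j}^{n} ballot n k` telescope to `ballot (n + 1) (j + 1)`. Together with
`ballot (n + 1) 1 = ballot (n + 1) 2` this is exactly the recursion defining `a`, and induction
on `n` concludes.
-/

open Finset

/-- The ballot number `(k / n) * (2n - k - 1).choose (n - 1)`. -/
noncomputable def ballot (n k : ℕ) : ℚ :=
  (k : ℚ) * (Nat.factorial (2 * n - k - 1) : ℚ) /
    ((Nat.factorial (n - k) : ℚ) * (Nat.factorial n : ℚ))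

theorem ballot_self {n : ℕ} (hn : 1 ≤ n) : ballot n n = 1 := by
  obtain ⟨m, rfl⟩ := Nat.exists_eq_add_of_le' hn
  simp only [ballot, show 2 * (m + 1) - (m + 1) - 1 = m by omega, Nat.sub_self,
    Nat.factorial_succ, Nat.factorial_zero]
  push_cast
  field_simp

theorem ballot_one_eq_ballot_two {n : ℕ} (hn : 2 ≤ n) : ballot n 1 = ballot n 2 := by
  obtain ⟨m, rfl⟩ := Nat.exists_eq_add_of_le' hn
  simp only [ballot, show 2 * (m + 2) - 1 - 1 = 2 * m + 1 + 1 by omega,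
    show 2 * (m + 2) - 2 - 1 = 2 * m + 1 by omega, show m + 2 - 1 = m + 1 by omega,
    Nat.add_sub_cancel, Nat.factorial_succ]
  push_cast
  field_simp
  ring

/-- For `j = n` the statement fails: `ballot (n + 1) (n + 2)` is a truncated-subtraction junk
value, not `0`. -/
theorem ballot_add_ballot_succ_succ {n j : ℕ} (hj : j < n) :
    ballot n j + ballot (n + 1) (j + 2) = ballot (n + 1) (j + 1) := by
  obtain ⟨m, rfl⟩ := Nat.exists_eq_add_of_lt hj
  simp only [ballot, show 2 * (j + m + 1) - j - 1 = j + 2 * m + 1 by omega,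
    show 2 * (j + m + 1 + 1) - (j + 2) - 1 = j + 2 * m + 1 by omega,
    show 2 * (j + m + 1 + 1) - (j + 1) - 1 = j + 2 * m + 1 + 1 by omega,
    show j + m + 1 - j = m + 1 by omega, show j + m + 1 + 1 - (j + 2) = m by omega,
    show j + m + 1 + 1 - (j + 1) = m + 1 by omega, Nat.factorial_succ]
  push_cast
  field_simp
  ring

theorem sum_Icc_ballot {n j : ℕ} (hj : 1 ≤ j) (hjn : j ≤ n) :
    ∑ k ∈ Icc j n, ballot n k = ballot (n + 1) (j + 1) := by
  induction hjn using Nat.decreasingInduction with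
  | self => rw [Icc_self, sum_singleton, ballot_self hj, ballot_self (by omega)]
  | of_succ j hjn ih =>
    rw [← insert_Icc_succ_left_eq_Icc hjn.le, sum_insert (by simp), Order.succ_eq_add_one,
      ih (by omega), ballot_add_ballot_succ_succ hjn]

/-- The sequence `a n k` with `a 1 1 = 1`, `a (n+1) 1 = Σ_{k=1}^n a n k` and
`a (n+1) i = Σ_{k=i-1}^n a n k` for `2 ≤ i ≤ n+1`, satisfies the closed form
`a n k = k·(2n−k−1)! / ((n−k)!·n!)` for all `1 ≤ k ≤ n`. -/
theorem ank_closed_form (a : ℕ → ℕ → ℚ)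
    (h11 : a 1 1 = 1)
    (hrec1 : ∀ n : ℕ, 1 ≤ n → a (n + 1) 1 = ∑ k ∈ Finset.Icc 1 n, a n k)
    (hrec : ∀ n : ℕ, 1 ≤ n → ∀ i : ℕ, 2 ≤ i → i ≤ n + 1 →
      a (n + 1) i = ∑ k ∈ Finset.Icc (i - 1) n, a n k) :
    ∀ n k : ℕ, 1 ≤ k → k ≤ n →
      a n k = (k : ℚ) * (Nat.factorial (2 * n - k - 1) : ℚ) /
        ((Nat.factorial (n - k) : ℚ) * (Nat.factorial n : ℚ)) := by
  intro n k hk hkn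
  change a n k = ballot n k
  induction n, hk.trans hkn using Nat.le_induction generalizing k with
  | base => rw [show k = 1 by omega, h11, ballot_self le_rfl]
  | succ n hn ih =>
    have tail_sum {j : ℕ} (hj : 1 ≤ j) (hjn : j ≤ n) :
        ∑ k ∈ Icc j n, a n k = ballot (n + 1) (j + 1) := by
      rw [← sum_Icc_ballot hj hjn]
      exact sum_congr rfl fun k hk ↦ ih k (hj.trans (mem_Icc.1 hk).1) (mem_Icc.1 hk).2
    obtain rfl | hk2 := hk.eq_or_lt
    · rw [hrec1 n hn, tail_sum le_rfl hn, ballot_one_eq_ballot_two (by omega)]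
    · rw [hrec n hn k hk2 hkn, tail_sum (by omega) (by omega), Nat.sub_add_cancel hk]
end

section
/- With a_{n,k} = k(2n−k−1)!/((n−k)!·n!) for 1 ≤ k ≤ n, the total sum Σ_{k=1}^{n} a_{n,k} equals the n-th Catalan number (2n)!/(n!·(n+1)!). -/
/-!
The partial sums from the top, `∑_{k' ≥ k} a_{n,k'}`, have the closed form
`(k + 1) / (n + 1) · C(2n - k, n)` (a ballot number), so the sum telescopes: at `k = 1` this
closed form is the Catalan number, and at `k = n + 1` it vanishes.
-/

open Finset
open scoped Nat

def ank (n k : ℕ) : ℚ := k * (2 * n - k - 1)! / ((n - k)! * n !)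

-- Written with `choose` rather than factorials so that it vanishes at `k = n + 1`.
def ankTail (n k : ℕ) : ℚ := (k + 1) * (2 * n - k).choose n / (n + 1)

lemma ankTail_of_le {n k : ℕ} (hkn : k ≤ n) :
    ankTail n k = (k + 1) * (2 * n - k)! / ((n - k)! * (n + 1)!) := by
  rw [ankTail, Nat.cast_choose ℚ (by omega), show 2 * n - k - n = n - k by omega]
  push_cast [Nat.factorial_succ]
  field_simp

lemma ankTail_one {n : ℕ} (hn : 1 ≤ n) : ankTail n 1 = (2 * n)! / (n ! * (n + 1)!) := by
  obtain ⟨m, rfl⟩ := Nat.exists_eq_add_of_le' hn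
  rw [ankTail_of_le hn, show 2 * (m + 1) - 1 = 2 * m + 1 by omega, Nat.add_sub_cancel,
    show 2 * (m + 1) = 2 * m + 1 + 1 by omega]
  push_cast [Nat.factorial_succ]
  field_simp
  ring

lemma ankTail_succ_self {n : ℕ} (hn : 1 ≤ n) : ankTail n (n + 1) = 0 := by
  rw [ankTail, Nat.choose_eq_zero_of_lt (by omega : 2 * n - (n + 1) < n)]
  simp

lemma ank_self {n : ℕ} (hn : 1 ≤ n) : ank n n = 1 := by
  obtain ⟨m, rfl⟩ := Nat.exists_eq_add_of_le' hn
  rw [ank, show 2 * (m + 1) - (m + 1) - 1 = m by omega, Nat.sub_self]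
  push_cast [Nat.factorial_succ, Nat.factorial_zero]
  field_simp

lemma ank_eq_ankTail_sub {n k : ℕ} (hk : 1 ≤ k) (hkn : k ≤ n) :
    ank n k = ankTail n k - ankTail n (k + 1) := by
  rcases hkn.eq_or_lt with rfl | hlt
  · rw [ank_self hk, ankTail_succ_self hk, ankTail_of_le le_rfl, sub_zero, Nat.sub_self,
      show 2 * k - k = k by omega]
    push_cast [Nat.factorial_succ, Nat.factorial_zero]
    field_simp
  obtain ⟨j, rfl⟩ := Nat.exists_eq_add_of_lt hlt
  rw [ank, ankTail_of_le hlt.le, ankTail_of_le hlt,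
    show 2 * (k + j + 1) - k - 1 = k + 2 * j + 1 by omega,
    show 2 * (k + j + 1) - k = k + 2 * j + 1 + 1 by omega,
    show 2 * (k + j + 1) - (k + 1) = k + 2 * j + 1 by omega,
    show k + j + 1 - k = j + 1 by omega, show k + j + 1 - (k + 1) = j by omega]
  push_cast [Nat.factorial_succ]
  field_simp
  ring

/-- With `a n k = k(2n−k−1)!/((n−k)!·n!)`, the total sum `Σ_{k=1}^n a n k` equals the
`n`-th Catalan number `(2n)!/(n!·(n+1)!)`. -/
theorem sum_ank_eq_catalan :
    ∀ n : ℕ, 1 ≤ n →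
      (∑ k ∈ Finset.Icc 1 n, (k : ℚ) * (Nat.factorial (2 * n - k - 1) : ℚ) /
        ((Nat.factorial (n - k) : ℚ) * (Nat.factorial n : ℚ)))
      = (Nat.factorial (2 * n) : ℚ) /
          ((Nat.factorial n : ℚ) * (Nat.factorial (n + 1) : ℚ)) := by
  intro n hn
  calc ∑ k ∈ Icc 1 n, ank n k
      = ∑ k ∈ Icc 1 n, -(ankTail n (k + 1) - ankTail n k) :=
        sum_congr rfl fun k hk => by
          rw [mem_Icc] at hk
          rw [ank_eq_ankTail_sub hk.1 hk.2, neg_sub]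
    _ = ankTail n 1 := by rw [sum_neg_distrib, sum_Icc_sub hn, ankTail_succ_self hn]; ring
    _ = _ := ankTail_one hn
end

section
/- The sequence b_{n,k} defined by b_{1,1} = 1, b_{1,0} = 0, and the recursions b_{n+1,0} = Σ_{k=1}^{n} k·a_{n,k} (where a_{n,k} = k(2n−k−1)!/((n−k)!n!)), b_{n+1,i} = Σ_{k=i−1}^{n} b_{n,k} for 1 ≤ i ≤ n+1, satisfies the closed form b_{n,k} = (k+1)(2n−k−2)!/((n−k)!·(n+1)!) · (3n² − 3n(k+1) + k² + 2k) for 0 ≤ k < n, and b_{n,n} = 1. -/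
/-- Closed form for `b n k`. -/
def Fc (n k : ℕ) : ℚ :=
  ((k : ℚ) + 1) * (Nat.factorial (2 * n - k - 2) : ℚ) /
    ((Nat.factorial (n - k) : ℚ) * (Nat.factorial (n + 1) : ℚ)) *
    (3 * (n : ℚ) ^ 2 - 3 * (n : ℚ) * ((k : ℚ) + 1) + (k : ℚ) ^ 2 + 2 * (k : ℚ))

/-- Closed form for the partial sum `Σ_{k=j}^n k·a(n,k)`. -/
def Sc (n j : ℕ) : ℚ :=
  (Nat.factorial (2 * n - j) : ℚ) /
    ((Nat.factorial (n - j) : ℚ) * (Nat.factorial (n + 2) : ℚ)) *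
    (((n : ℚ) + 1) * (j : ℚ) ^ 2 + (2 * (n : ℚ) - 1) * (j : ℚ) + 3 * (n : ℚ))

lemma fac_ne (m : ℕ) : (Nat.factorial m : ℚ) ≠ 0 :=
  Nat.cast_ne_zero.mpr (Nat.factorial_ne_zero m)

/-- a-sum telescoping step. -/
lemma Sc_step (j t : ℕ) :
    Sc (j + 1 + t) j =
      (j : ℚ) * ((j : ℚ) * (Nat.factorial (2 * (j + 1 + t) - j - 1) : ℚ) /
        ((Nat.factorial ((j + 1 + t) - j) : ℚ) * (Nat.factorial (j + 1 + t) : ℚ))) +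
      Sc (j + 1 + t) (j + 1) := by
  unfold Sc
  rw [show 2 * (j + 1 + t) - j - 1 = j + 2 * t + 1 by omega,
      show 2 * (j + 1 + t) - j = (j + 2 * t + 1) + 1 by omega,
      show (j + 1 + t) - j = t + 1 by omega,
      show 2 * (j + 1 + t) - (j + 1) = j + 2 * t + 1 by omega,
      show (j + 1 + t) - (j + 1) = t by omega,
      show j + 1 + t + 2 = ((j + t + 1) + 1) + 1 by omega,
      show j + 1 + t = j + t + 1 by omega]
  rw [Nat.factorial_succ ((j + t + 1) + 1), Nat.factorial_succ (j + t + 1),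
      Nat.factorial_succ (j + 2 * t + 1), Nat.factorial_succ t]
  have h1 := fac_ne (j + 2 * t + 1)
  have h2 := fac_ne t
  have h3 := fac_ne (j + t + 1)
  have h4 : ((t : ℚ) + 1) ≠ 0 := by positivity
  have h5 : ((j : ℚ) + t + 1 + 1 + 1) ≠ 0 := by positivity
  have h6 : ((j : ℚ) + t + 1 + 1) ≠ 0 := by positivity
  push_cast
  field_simp
  ring

/-- a-sum base: `Sc n n = n·a(n,n)`. -/
lemma Sc_diag (m : ℕ) :
    ((m + 1 : ℕ) : ℚ) * (((m + 1 : ℕ) : ℚ) *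
        (Nat.factorial (2 * (m + 1) - (m + 1) - 1) : ℚ) /
        ((Nat.factorial ((m + 1) - (m + 1)) : ℚ) * (Nat.factorial (m + 1) : ℚ))) =
      Sc (m + 1) (m + 1) := by
  unfold Sc
  rw [show 2 * (m + 1) - (m + 1) - 1 = m by omega,
      show 2 * (m + 1) - (m + 1) = m + 1 by omega,
      show (m + 1) - (m + 1) = 0 by omega,
      show m + 1 + 2 = ((m + 1) + 1) + 1 by omega]
  rw [Nat.factorial_succ ((m + 1) + 1), Nat.factorial_succ (m + 1), Nat.factorial_succ m,
      Nat.factorial_zero]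
  have h1 := fac_ne m
  have h4 : ((m : ℚ) + 1) ≠ 0 := by positivity
  have h5 : ((m : ℚ) + 1 + 1) ≠ 0 := by positivity
  have h6 : ((m : ℚ) + 1 + 1 + 1) ≠ 0 := by positivity
  push_cast
  field_simp
  ring

/-- The a-sum closed form. -/
lemma sumA : ∀ d j n : ℕ, 1 ≤ j → j + d = n →
    (∑ k ∈ Finset.Icc j n, (k : ℚ) *
        ((k : ℚ) * (Nat.factorial (2 * n - k - 1) : ℚ) /
          ((Nat.factorial (n - k) : ℚ) * (Nat.factorial n : ℚ)))) = Sc n j := by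
  intro d
  induction d with
  | zero =>
    intro j n hj hjn
    obtain ⟨m, rfl⟩ : ∃ m, j = m + 1 := ⟨j - 1, by omega⟩
    subst hjn
    simp only [Nat.add_zero, Finset.Icc_self, Finset.sum_singleton]
    exact Sc_diag m
  | succ d ih =>
    intro j n hj hjn
    rw [← Finset.Ico_add_one_right_eq_Icc,
        Finset.sum_eq_sum_Ico_succ_bot (by omega : j < n + 1),
        Finset.Ico_add_one_right_eq_Icc, ih (j + 1) n (by omega) (by omega)]
    have := Sc_step j d
    rw [show j + 1 + d = n by omega] at this
    exact this.symm

/-- b-telescoping step. -/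
lemma Fc_step (j t : ℕ) :
    Fc (j + 1 + t + 1) (j + 1) = Fc (j + 1 + t) j + Fc (j + 1 + t + 1) (j + 2) := by
  unfold Fc
  rw [show 2 * (j + 1 + t + 1) - (j + 1) - 2 = (j + 2 * t) + 1 by omega,
      show (j + 1 + t + 1) - (j + 1) = t + 1 by omega,
      show 2 * (j + 1 + t) - j - 2 = j + 2 * t by omega,
      show (j + 1 + t) - j = t + 1 by omega,
      show 2 * (j + 1 + t + 1) - (j + 2) - 2 = j + 2 * t by omega,
      show (j + 1 + t + 1) - (j + 2) = t by omega,
      show j + 1 + t + 1 + 1 = ((j + t + 2)) + 1 by omega,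
      show j + 1 + t + 1 = j + t + 2 by omega]
  rw [Nat.factorial_succ (j + 2 * t), Nat.factorial_succ (t), Nat.factorial_succ (j + t + 2)]
  have h1 := fac_ne (j + 2 * t)
  have h2 := fac_ne t
  have h3 := fac_ne (j + t + 2)
  have h4 : ((t : ℚ) + 1) ≠ 0 := by positivity
  have h5 : ((j : ℚ) + t + 2 + 1) ≠ 0 := by positivity
  push_cast
  field_simp
  ring

/-- top value: `Fc (n+1) (n+1) = 1` for `n ≥ 1`. -/
lemma Fc_top (m : ℕ) : Fc (m + 1 + 1) (m + 1 + 1) = 1 := by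
  unfold Fc
  rw [show 2 * (m + 1 + 1) - (m + 1 + 1) - 2 = m by omega,
      show (m + 1 + 1) - (m + 1 + 1) = 0 by omega,
      show m + 1 + 1 + 1 = ((m + 1) + 1) + 1 by omega]
  rw [Nat.factorial_succ ((m + 1) + 1), Nat.factorial_succ (m + 1), Nat.factorial_succ m,
      Nat.factorial_zero]
  have h1 := fac_ne m
  have h4 : ((m : ℚ) + 1) ≠ 0 := by positivity
  have h5 : ((m : ℚ) + 1 + 1) ≠ 0 := by positivity
  have h6 : ((m : ℚ) + 1 + 1 + 1) ≠ 0 := by positivity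
  push_cast
  field_simp
  ring

/-- `Sc n 1 = Fc (n+1) 0` for `n ≥ 1`. -/
lemma Sc_one (m : ℕ) : Sc (m + 1) 1 = Fc (m + 1 + 1) 0 := by
  unfold Sc Fc
  rw [show 2 * (m + 1) - 1 = 2 * m + 1 by omega,
      show (m + 1) - 1 = m by omega,
      show 2 * (m + 1 + 1) - 0 - 2 = (2 * m + 1) + 1 by omega,
      show (m + 1 + 1) - 0 = (m + 1) + 1 by omega,
      show m + 1 + 2 = ((m + 1) + 1) + 1 by omega,
      show m + 1 + 1 + 1 = ((m + 1) + 1) + 1 by omega]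
  rw [Nat.factorial_succ (2 * m + 1), Nat.factorial_succ ((m + 1) + 1),
      Nat.factorial_succ (m + 1), Nat.factorial_succ m]
  have h1 := fac_ne (2 * m + 1)
  have h2 := fac_ne m
  have h4 : ((m : ℚ) + 1) ≠ 0 := by positivity
  have h5 : ((m : ℚ) + 1 + 1) ≠ 0 := by positivity
  have h6 : ((m : ℚ) + 1 + 1 + 1) ≠ 0 := by positivity
  push_cast
  field_simp
  ring

/-- Sum of `b n k` over `Icc j n` given the closed form at level `n`. -/
lemma sumB (b : ℕ → ℕ → ℚ) :
    ∀ d j n : ℕ, 1 ≤ n → j + d = n →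
      (∀ k : ℕ, k < n → b n k = Fc n k) → b n n = 1 →
      (∑ k ∈ Finset.Icc j n, b n k) = Fc (n + 1) (j + 1) := by
  intro d
  induction d with
  | zero =>
    intro j n hn hjn hFc hb
    obtain ⟨m, rfl⟩ : ∃ m, n = m + 1 := ⟨n - 1, by omega⟩
    subst hjn
    simp only [Nat.add_zero, Finset.Icc_self, Finset.sum_singleton]
    rw [hb, Fc_top]
  | succ d ih =>
    intro j n hn hjn hFc hb
    rw [← Finset.Ico_add_one_right_eq_Icc,
        Finset.sum_eq_sum_Ico_succ_bot (by omega : j < n + 1),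
        Finset.Ico_add_one_right_eq_Icc, ih (j + 1) n hn (by omega) hFc hb,
        hFc j (by omega)]
    have := Fc_step j d
    rw [show j + 1 + d = n by omega] at this
    rw [show j + 2 = j + 1 + 1 from rfl] at this
    exact this.symm

/-- The sequence `b n k` with `b 1 1 = 1`, `b 1 0 = 0`,
`b (n+1) 0 = Σ_{k=1}^n k · a n k` (where `a n k = k(2n−k−1)!/((n−k)!·n!)`), and
`b (n+1) i = Σ_{k=i−1}^n b n k` for `1 ≤ i ≤ n+1`, satisfies the closed form
`b n k = (k+1)(2n−k−2)!/((n−k)!(n+1)!)·(3n² − 3n(k+1) + k² + 2k)` for `0 ≤ k < n`,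
together with `b n n = 1`. -/
theorem bnk_closed_form (b : ℕ → ℕ → ℚ)
    (h11 : b 1 1 = 1) (h10 : b 1 0 = 0)
    (hrec0 : ∀ n : ℕ, 1 ≤ n → b (n + 1) 0 =
      ∑ k ∈ Finset.Icc 1 n, (k : ℚ) *
        ((k : ℚ) * (Nat.factorial (2 * n - k - 1) : ℚ) /
          ((Nat.factorial (n - k) : ℚ) * (Nat.factorial n : ℚ))))
    (hrec : ∀ n : ℕ, 1 ≤ n → ∀ i : ℕ, 1 ≤ i → i ≤ n + 1 →
      b (n + 1) i = ∑ k ∈ Finset.Icc (i - 1) n, b n k) :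
    ∀ n : ℕ, 1 ≤ n →
      (∀ k : ℕ, k < n →
        b n k = ((k : ℚ) + 1) * (Nat.factorial (2 * n - k - 2) : ℚ) /
            ((Nat.factorial (n - k) : ℚ) * (Nat.factorial (n + 1) : ℚ)) *
            (3 * (n : ℚ) ^ 2 - 3 * (n : ℚ) * ((k : ℚ) + 1) + (k : ℚ) ^ 2 + 2 * (k : ℚ))) ∧
      b n n = 1 := by
  have key : ∀ n : ℕ, 1 ≤ n → (∀ k : ℕ, k < n → b n k = Fc n k) ∧ b n n = 1 := by
    intro n hn
    induction n, hn using Nat.le_induction with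
    | base =>
      refine ⟨fun k hk => ?_, h11⟩
      interval_cases k
      rw [h10]
      unfold Fc
      norm_num [Nat.factorial]
    | succ n hn ih =>
      constructor
      · intro k hk
        match k with
        | 0 =>
          rw [hrec0 n hn, sumA (n - 1) 1 n (le_refl 1) (by omega)]
          obtain ⟨m, rfl⟩ : ∃ m, n = m + 1 := ⟨n - 1, by omega⟩
          exact Sc_one m
        | (i + 1) =>
          rw [hrec n hn (i + 1) (by omega) (by omega)]
          simp only [Nat.add_sub_cancel]
          exact sumB b (n - i) i n hn (by omega) ih.1 ih.2
      · rw [hrec n hn (n + 1) (by omega) (le_refl _)]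
        simp only [Nat.add_sub_cancel, Finset.Icc_self, Finset.sum_singleton]
        exact ih.2
  intro n hn
  obtain ⟨h1, h2⟩ := key n hn
  exact ⟨fun k hk => h1 k hk, h2⟩
end
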